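/- arXiv:2006.11571 — 5 statements merged into one kernel-verified Lean document; each statement's English description precedes it below -/
import Mathlib

section
/- For each natural number n ≥ 1, let D_n = {(x,y) ∈ ℝ² : x ≥ 0 and −n·x ≤ y ≤ n·x}, and let D = ⋃_n D_n. Then: (a) each D_n is linearly convex, i.e., for every point p ∈ ℝ² \ D_n there exists an affine line through p disjoint from D_n; (b) the point (0,1) does not belong to D, yet every affine line in ℝ² passing through (0,1) intersects D; hence D is not linearly convex. In particular, a union of an increasing sequence of linearly convex sets need not be linearly convex. -/
/-- The angular region `D_n = {(x,y) : x ≥ 0, -n·x ≤ y ≤ n·x}`. -/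
def Dseq (n : ℕ) : Set (ℝ × ℝ) :=
  {p | 0 ≤ p.1 ∧ -((n : ℝ) * p.1) ≤ p.2 ∧ p.2 ≤ (n : ℝ) * p.1}

/-- The union `D = ⋃_{n ≥ 1} D_n`. -/
def DU : Set (ℝ × ℝ) := ⋃ n ∈ {n : ℕ | 1 ≤ n}, Dseq n

/-- A set `E ⊆ ℝ²` is linearly convex if through each point of its complement there
passes an affine line disjoint from `E`. -/
def LinearlyConvex2 (E : Set (ℝ × ℝ)) : Prop :=
  ∀ p ∉ E, ∃ l : AffineSubspace ℝ (ℝ × ℝ),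
    Module.finrank ℝ l.direction = 1 ∧ p ∈ l ∧ (l : Set (ℝ × ℝ)) ∩ E = ∅

/-! Each `D_n` is cut out by the three half-planes `x ≥ 0`, `y + n x ≥ 0`, `n x - y ≥ 0`; a point
outside `D_n` violates one of them, and the line through it parallel to that half-plane's edge
misses `D_n`. The union `D` contains the open half-plane `x > 0` and the origin, so a line through
`(0, 1)` meets `D`: if it is not vertical it enters `x > 0`, and if it is vertical it is `x = 0`. -/

open Module

theorem finrank_direction_mk'_ker {V : Type*} [AddCommGroup V] [Module ℝ V]
    [FiniteDimensional ℝ V] {f : Dual ℝ V} (hf : f ≠ 0) (p : V) :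
    finrank ℝ (AffineSubspace.mk' p (LinearMap.ker f)).direction = finrank ℝ V - 1 := by
  rw [AffineSubspace.direction_mk', ← Dual.finrank_ker_add_one_of_ne_zero hf, Nat.add_sub_cancel]

theorem linearlyConvex2_of_forall_notMem_exists_lt {E : Set (ℝ × ℝ)}
    (h : ∀ p ∉ E, ∃ f : Dual ℝ (ℝ × ℝ), f ≠ 0 ∧ ∀ q ∈ E, f p < f q) : LinearlyConvex2 E := by
  intro p hp
  obtain ⟨f, hf, hlt⟩ := h p hp
  refine ⟨AffineSubspace.mk' p (LinearMap.ker f), ?_, AffineSubspace.self_mem_mk' _ _, ?_⟩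
  · simp [finrank_direction_mk'_ker hf]
  · refine Set.eq_empty_of_forall_notMem fun q ⟨hql, hqE⟩ => (hlt q hqE).ne ?_
    rw [SetLike.mem_coe, AffineSubspace.mem_mk', LinearMap.mem_ker, vsub_eq_sub, map_sub,
      sub_eq_zero] at hql
    exact hql.symm

theorem linearlyConvex2_Dseq (n : ℕ) : LinearlyConvex2 (Dseq n) := by
  apply linearlyConvex2_of_forall_notMem_exists_lt
  intro p hp
  simp only [Dseq, Set.mem_ofPred_eq, not_and_or, not_le] at hp
  have ne_zero {f : Dual ℝ (ℝ × ℝ)} {x : ℝ × ℝ} (h : f x ≠ 0) : f ≠ 0 := fun hf => h (by simp [hf])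
  rcases hp with hx | hy | hy
  · refine ⟨LinearMap.fst ℝ ℝ ℝ, ne_zero (x := (1, 0)) (by simp), fun q hq => ?_⟩
    simp only [LinearMap.fst_apply]
    linarith [hq.1]
  · refine ⟨(n : ℝ) • LinearMap.fst ℝ ℝ ℝ + LinearMap.snd ℝ ℝ ℝ, ne_zero (x := (0, 1)) (by simp),
      fun q hq => ?_⟩
    simp only [LinearMap.add_apply, LinearMap.smul_apply, LinearMap.fst_apply,
      LinearMap.snd_apply, smul_eq_mul]
    linarith [hq.2.1]
  · refine ⟨(n : ℝ) • LinearMap.fst ℝ ℝ ℝ - LinearMap.snd ℝ ℝ ℝ, ne_zero (x := (0, 1)) (by simp),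
      fun q hq => ?_⟩
    simp only [LinearMap.sub_apply, LinearMap.smul_apply, LinearMap.fst_apply,
      LinearMap.snd_apply, smul_eq_mul]
    linarith [hq.2.2]

theorem exists_mem_fst_gt_or_vertical {l : AffineSubspace ℝ (ℝ × ℝ)} (hl : l.direction ≠ ⊥)
    {p : ℝ × ℝ} (hp : p ∈ l) : (∃ q ∈ l, p.1 < q.1) ∨ ∀ y : ℝ, (p.1, y) ∈ l := by
  obtain ⟨v, hvl, hv⟩ := Submodule.exists_mem_ne_zero_of_ne_bot hl
  have mem (t : ℝ) : t • v +ᵥ p ∈ l :=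
    AffineSubspace.vadd_mem_of_mem_direction (l.direction.smul_mem t hvl) hp
  by_cases hv₁ : v.1 = 0
  · have hv₂ : v.2 ≠ 0 := fun hv₂ => hv (Prod.ext hv₁ hv₂)
    refine .inr fun y => ?_
    convert mem ((y - p.2) / v.2) using 1
    ext <;> simp [hv₁, hv₂]
  · exact .inl ⟨v.1 • v +ᵥ p, mem v.1, by simpa using mul_self_pos.2 hv₁⟩

theorem mem_DU_of_fst_pos {p : ℝ × ℝ} (hp : 0 < p.1) : p ∈ DU := by
  obtain ⟨n, hn⟩ := exists_nat_ge (|p.2| / p.1)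
  rw [div_le_iff₀ hp, abs_le] at hn
  simp only [DU, Set.mem_iUnion]
  refine ⟨n + 1, Nat.le_add_left 1 n, hp.le, ?_, ?_⟩ <;> push_cast <;> nlinarith

theorem zero_mem_DU : ((0, 0) : ℝ × ℝ) ∈ DU := by
  simp only [DU, Set.mem_iUnion]
  exact ⟨1, Nat.le_refl 1, by simp [Dseq]⟩

theorem zero_one_notMem_DU : ((0, 1) : ℝ × ℝ) ∉ DU := by
  simp [DU, Dseq]

theorem inter_DU_nonempty_of_zero_one_mem {l : AffineSubspace ℝ (ℝ × ℝ)}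
    (hl : finrank ℝ l.direction = 1) (h : ((0 : ℝ), (1 : ℝ)) ∈ l) :
    ((l : Set (ℝ × ℝ)) ∩ DU).Nonempty := by
  have hl : l.direction ≠ ⊥ := Submodule.one_le_finrank_iff.mp hl.ge
  rcases exists_mem_fst_gt_or_vertical hl h with ⟨q, hql, hq⟩ | hvert
  · exact ⟨q, hql, mem_DU_of_fst_pos hq⟩
  · exact ⟨(0, 0), hvert 0, zero_mem_DU⟩

/-- (a) each `D_n` (for `n ≥ 1`) is linearly convex; (b) `(0,1) ∉ D` yet every affine
line through `(0,1)` meets `D`; hence `D` is not linearly convex: a union of an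
increasing sequence of linearly convex sets need not be linearly convex. -/
theorem union_of_linearlyConvex_not_linearlyConvex :
    (∀ n : ℕ, 1 ≤ n → LinearlyConvex2 (Dseq n)) ∧
    ((0, 1) : ℝ × ℝ) ∉ DU ∧
    (∀ l : AffineSubspace ℝ (ℝ × ℝ), Module.finrank ℝ l.direction = 1 →
      (((0 : ℝ), (1 : ℝ)) ∈ l) → ((l : Set (ℝ × ℝ)) ∩ DU).Nonempty) ∧
    ¬ LinearlyConvex2 DU := by
  refine ⟨fun n _ => linearlyConvex2_Dseq n, zero_one_notMem_DU,
    fun l hl h => inter_DU_nonempty_of_zero_one_mem hl h, fun hDU => ?_⟩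
  obtain ⟨l, hl, h, hdisj⟩ := hDU _ zero_one_notMem_DU
  exact (inter_DU_nonempty_of_zero_one_mem hl h).ne_empty hdisj
end

section
/- Let n be a natural number, W a set of affine subspaces of ℝⁿ, E ⊆ ℝⁿ a compact set, and (D_k)_{k∈ℕ} a sequence of open sets approximating E from outside, i.e., D_{k+1} ⊆ D_k for all k, E = ⋂_k D_k, and every open set U containing E contains D_k for some k. Then E* = ⋃_k D_k* and E** = ⋂_k D_k**. -/
/-! Affine subspaces of `ℝⁿ` are closed, so a subspace missing `E` has an open complement
containing `E`, hence containing some `D k`. Conversely every `D k` contains `E`, so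
missing `D k` means missing `E`. Taking complements of the unions of these subspaces gives the
statement about `E**`. -/

/-- The conjugate set `E* = {l ∈ W | l ∩ E = ∅}` of a set `E ⊆ ℝⁿ` relative to a
set `W` of affine subspaces of `ℝⁿ`. -/
def conjSet {n : ℕ} (W : Set (AffineSubspace ℝ (EuclideanSpace ℝ (Fin n))))
    (E : Set (EuclideanSpace ℝ (Fin n))) :
    Set (AffineSubspace ℝ (EuclideanSpace ℝ (Fin n))) :=
  {l | l ∈ W ∧ (l : Set (EuclideanSpace ℝ (Fin n))) ∩ E = ∅}

/-- The double conjugate `E** = ℝⁿ \ ⋃ {l : l ∈ E*}`. -/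
def biconjSet {n : ℕ} (W : Set (AffineSubspace ℝ (EuclideanSpace ℝ (Fin n))))
    (E : Set (EuclideanSpace ℝ (Fin n))) : Set (EuclideanSpace ℝ (Fin n)) :=
  (⋃ l ∈ conjSet W E, (l : Set (EuclideanSpace ℝ (Fin n))))ᶜ

section Conjugate

variable {n : ℕ} {W : Set (AffineSubspace ℝ (EuclideanSpace ℝ (Fin n)))}

theorem mem_conjSet_iff {E : Set (EuclideanSpace ℝ (Fin n))}
    {l : AffineSubspace ℝ (EuclideanSpace ℝ (Fin n))} :
    l ∈ conjSet W E ↔ l ∈ W ∧ Disjoint (l : Set (EuclideanSpace ℝ (Fin n))) E := by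
  rw [Set.disjoint_iff_inter_eq_empty]
  rfl

theorem conjSet_anti {E F : Set (EuclideanSpace ℝ (Fin n))} (hEF : E ⊆ F) :
    conjSet W F ⊆ conjSet W E := fun _ hl =>
  mem_conjSet_iff.2 ⟨(mem_conjSet_iff.1 hl).1, (mem_conjSet_iff.1 hl).2.mono_right hEF⟩

theorem exists_mem_conjSet_of_mem_conjSet {E : Set (EuclideanSpace ℝ (Fin n))}
    {ι : Type*} {D : ι → Set (EuclideanSpace ℝ (Fin n))}
    (happrox : ∀ U : Set (EuclideanSpace ℝ (Fin n)), IsOpen U → E ⊆ U → ∃ i, D i ⊆ U)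
    {l : AffineSubspace ℝ (EuclideanSpace ℝ (Fin n))} (hl : l ∈ conjSet W E) :
    ∃ i, l ∈ conjSet W (D i) := by
  obtain ⟨hlW, hlE⟩ := mem_conjSet_iff.1 hl
  obtain ⟨i, hi⟩ := happrox _ l.closed_of_finiteDimensional.isOpen_compl
    (Set.subset_compl_comm.1 hlE.subset_compl_right)
  exact ⟨i, mem_conjSet_iff.2 ⟨hlW, disjoint_compl_right.mono_right hi⟩⟩

theorem conjSet_eq_iUnion_of_outer_approx {E : Set (EuclideanSpace ℝ (Fin n))}
    {ι : Type*} {D : ι → Set (EuclideanSpace ℝ (Fin n))} (hED : ∀ i, E ⊆ D i)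
    (happrox : ∀ U : Set (EuclideanSpace ℝ (Fin n)), IsOpen U → E ⊆ U → ∃ i, D i ⊆ U) :
    conjSet W E = ⋃ i, conjSet W (D i) :=
  subset_antisymm (fun _ hl => Set.mem_iUnion.2 (exists_mem_conjSet_of_mem_conjSet happrox hl))
    (Set.iUnion_subset fun i => conjSet_anti (hED i))

theorem biconjSet_eq_iInter_of_conjSet_eq_iUnion {E : Set (EuclideanSpace ℝ (Fin n))}
    {ι : Type*} {D : ι → Set (EuclideanSpace ℝ (Fin n))}
    (h : conjSet W E = ⋃ i, conjSet W (D i)) :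
    biconjSet W E = ⋂ i, biconjSet W (D i) := by
  simp only [biconjSet, h, Set.biUnion_iUnion, Set.compl_iUnion]

end Conjugate

theorem conjSet_biconjSet_of_outer_approx_general {n : ℕ}
    (W : Set (AffineSubspace ℝ (EuclideanSpace ℝ (Fin n))))
    (E : Set (EuclideanSpace ℝ (Fin n)))
    (D : ℕ → Set (EuclideanSpace ℝ (Fin n)))
    (hinter : E = ⋂ k, D k)
    (happrox : ∀ U : Set (EuclideanSpace ℝ (Fin n)), IsOpen U → E ⊆ U → ∃ k, D k ⊆ U) :
    conjSet W E = (⋃ k, conjSet W (D k)) ∧ biconjSet W E = ⋂ k, biconjSet W (D k) := by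
  have hED : ∀ k, E ⊆ D k := fun k => hinter ▸ Set.iInter_subset D k
  have hconj := conjSet_eq_iUnion_of_outer_approx (W := W) hED happrox
  exact ⟨hconj, biconjSet_eq_iInter_of_conjSet_eq_iUnion hconj⟩

/-- If a compact `E` is approximated from outside by a sequence of open sets `D k`,
then `E* = ⋃ k, (D k)*` and `E** = ⋂ k, (D k)**`. -/
theorem conjSet_biconjSet_of_outer_approx {n : ℕ}
    (W : Set (AffineSubspace ℝ (EuclideanSpace ℝ (Fin n))))
    (E : Set (EuclideanSpace ℝ (Fin n))) (hE : IsCompact E)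
    (D : ℕ → Set (EuclideanSpace ℝ (Fin n)))
    (hopen : ∀ k, IsOpen (D k))
    (hmono : ∀ k, D (k + 1) ⊆ D k)
    (hinter : E = ⋂ k, D k)
    (happrox : ∀ U : Set (EuclideanSpace ℝ (Fin n)), IsOpen U → E ⊆ U → ∃ k, D k ⊆ U) :
    conjSet W E = (⋃ k, conjSet W (D k)) ∧ biconjSet W E = ⋂ k, biconjSet W (D k) :=
  conjSet_biconjSet_of_outer_approx_general W E D hinter happrox
end

section
/- Let n be a natural number, W a set of affine subspaces of ℝⁿ, and D ⊆ ℝⁿ a nonempty connected open set that is weakly convex relative to W, i.e., for every point x of the frontier of D there exists l ∈ W with x ∈ l and l ∩ D = ∅. Then D is a connected component of the set D** (which is convex relative to W). -/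
/-- A set `E ⊆ ℝⁿ` is convex relative to a set `W` of affine subspaces of `ℝⁿ` if
through every point of its complement there passes an element of `W` disjoint from `E`. -/
def ConvexRel {n : ℕ} (W : Set (AffineSubspace ℝ (EuclideanSpace ℝ (Fin n))))
    (E : Set (EuclideanSpace ℝ (Fin n))) : Prop :=
  ∀ x ∉ E, ∃ l ∈ W, x ∈ l ∧ (l : Set (EuclideanSpace ℝ (Fin n))) ∩ E = ∅

/-!
Every `l ∈ E*` lies in the complement of `E**`, so `E**` is convex relative to `W` for any `E`,
and `E ⊆ E**`. Weak convexity puts each frontier point of `D` on some `l ∈ D*`, hence outside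
`D**`. The component of `D**` through a point of `D` is therefore a preconnected set meeting the
open set `D` but not its frontier, so it lies in `D`; conversely it contains the connected set `D`.
-/

open Set

lemma connectedComponentIn_eq_of_disjoint_frontier {X : Type*} [TopologicalSpace X]
    {D F : Set X} {x : X} (hD : IsOpen D) (hpre : IsPreconnected D) (hDF : D ⊆ F)
    (hfr : Disjoint (frontier D) F) (hx : x ∈ D) : connectedComponentIn F x = D := by
  refine subset_antisymm ?_ (hpre.subset_connectedComponentIn hx hDF)
  refine isPreconnected_connectedComponentIn.subset_of_closure_inter_subset hD
    ⟨x, mem_connectedComponentIn (hDF hx), hx⟩ ?_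
  rintro y ⟨hyD, hyC⟩
  by_contra hy
  exact disjoint_left.mp hfr ⟨hyD, by rwa [hD.interior_eq]⟩ (connectedComponentIn_subset F x hyC)

section Biconj

variable {n : ℕ} (W : Set (AffineSubspace ℝ (EuclideanSpace ℝ (Fin n))))
  (E : Set (EuclideanSpace ℝ (Fin n)))

lemma subset_biconjSet : E ⊆ biconjSet W E := by
  intro y hy hmem
  obtain ⟨l, hl, hyl⟩ := mem_iUnion₂.mp hmem
  exact eq_empty_iff_forall_notMem.mp hl.2 y ⟨hyl, hy⟩

lemma convexRel_biconjSet : ConvexRel W (biconjSet W E) := by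
  intro x hx
  obtain ⟨l, hl, hxl⟩ := mem_iUnion₂.mp (notMem_compl_iff.mp hx)
  exact ⟨l, hl.1, hxl, eq_empty_of_forall_notMem fun y ⟨hyl, hyB⟩ =>
    hyB (mem_iUnion₂.mpr ⟨l, hl, hyl⟩)⟩

lemma disjoint_frontier_biconjSet
    (hweak : ∀ x ∈ frontier E, ∃ l ∈ W, x ∈ l ∧ (l : Set (EuclideanSpace ℝ (Fin n))) ∩ E = ∅) :
    Disjoint (frontier E) (biconjSet W E) :=
  disjoint_left.mpr fun x hx hxB =>
    let ⟨l, hlW, hxl, hlE⟩ := hweak x hx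
    hxB (mem_iUnion₂.mpr ⟨l, ⟨hlW, hlE⟩, hxl⟩)

end Biconj

/-- Every nonempty connected open set `D` that is weakly convex relative to `W`
is a connected component of the set `D**`, which is itself convex relative to `W`. -/
theorem weaklyConvex_open_isComponent_biconj {n : ℕ}
    (W : Set (AffineSubspace ℝ (EuclideanSpace ℝ (Fin n))))
    (D : Set (EuclideanSpace ℝ (Fin n)))
    (hopen : IsOpen D) (hconn : IsConnected D)
    (hweak : ∀ x ∈ frontier D, ∃ l ∈ W, x ∈ l ∧ (l : Set (EuclideanSpace ℝ (Fin n))) ∩ D = ∅) :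
    ConvexRel W (biconjSet W D) ∧
      ∃ x ∈ D, connectedComponentIn (biconjSet W D) x = D := by
  obtain ⟨⟨x, hx⟩, hpre⟩ := hconn
  exact ⟨convexRel_biconjSet W D, x, hx,
    connectedComponentIn_eq_of_disjoint_frontier hopen hpre (subset_biconjSet W D)
      (disjoint_frontier_biconjSet W D hweak) hx⟩
end

section
/- Let n be a natural number, W a set of affine subspaces of ℝⁿ, U ⊆ ℝⁿ an open set convex relative to W, and C a connected component of U. Then C is weakly convex relative to W: for every point x of the frontier of C there exists l ∈ W with x ∈ l and l ∩ C = ∅. -/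
/-!
A point of the frontier of a component `C` of the open set `U` cannot lie in `U`: otherwise
it would lie in `closure C ∩ U = C`, and `C` is open. So convexity of `U` relative to `W` gives
an element of `W` through it missing `U`, hence missing `C ⊆ U`.
-/

open Set

section ConnectedComponentIn

variable {X : Type*} [TopologicalSpace X]

/-- Adding a point of `closure C ∩ F` to `C` keeps it preconnected, so by maximality it was
already in `C`. -/
theorem closure_connectedComponentIn_inter_subset (F : Set X) (x : X) :
    closure (connectedComponentIn F x) ∩ F ⊆ connectedComponentIn F x := by
  rintro z ⟨hzC, hzF⟩
  obtain ⟨w, hwC⟩ : (connectedComponentIn F x).Nonempty := closure_nonempty_iff.mp ⟨z, hzC⟩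
  have hinsert : insert z (connectedComponentIn F x) ⊆ connectedComponentIn F z :=
    (isPreconnected_connectedComponentIn.subset_closure (subset_insert z _)
      (insert_subset hzC subset_closure)).subset_connectedComponentIn
      (mem_insert z _) (insert_subset hzF (connectedComponentIn_subset F x))
  have hwz : w ∈ connectedComponentIn F z := hinsert (mem_insert_of_mem z hwC)
  rw [connectedComponentIn_eq hwC, ← connectedComponentIn_eq hwz]
  exact mem_connectedComponentIn hzF

theorem IsOpen.disjoint_frontier_connectedComponentIn [LocallyConnectedSpace X] {F : Set X}
    (hF : IsOpen F) (x : X) : Disjoint (frontier (connectedComponentIn F x)) F := by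
  rw [disjoint_iff_inter_eq_empty, eq_empty_iff_forall_notMem]
  rintro z ⟨⟨hzcl, hzint⟩, hzF⟩
  rw [hF.connectedComponentIn.interior_eq] at hzint
  exact hzint (closure_connectedComponentIn_inter_subset F x ⟨hzcl, hzF⟩)

end ConnectedComponentIn

theorem ConvexRel.exists_disjoint_of_subset {n : ℕ}
    {W : Set (AffineSubspace ℝ (EuclideanSpace ℝ (Fin n)))}
    {U S : Set (EuclideanSpace ℝ (Fin n))} (hconv : ConvexRel W U) (hSU : S ⊆ U)
    {x : EuclideanSpace ℝ (Fin n)} (hx : x ∉ U) :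
    ∃ l ∈ W, x ∈ l ∧ (l : Set (EuclideanSpace ℝ (Fin n))) ∩ S = ∅ := by
  obtain ⟨l, hlW, hxl, hlU⟩ := hconv x hx
  exact ⟨l, hlW, hxl, subset_empty_iff.mp (hlU ▸ inter_subset_inter_right _ hSU)⟩

/-- Every connected component of an open set convex relative to `W` is weakly convex
relative to `W`: through every point of its frontier passes an element of `W` disjoint
from the component. -/
theorem component_of_convexRel_open_weaklyConvex {n : ℕ}
    (W : Set (AffineSubspace ℝ (EuclideanSpace ℝ (Fin n))))
    (U : Set (EuclideanSpace ℝ (Fin n)))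
    (hopen : IsOpen U) (hconv : ConvexRel W U)
    (C : Set (EuclideanSpace ℝ (Fin n)))
    (hC : ∃ x ∈ U, C = connectedComponentIn U x) :
    ∀ x ∈ frontier C, ∃ l ∈ W, x ∈ l ∧ (l : Set (EuclideanSpace ℝ (Fin n))) ∩ C = ∅ := by
  obtain ⟨x₀, -, rfl⟩ := hC
  intro x hx
  have hxU : x ∉ U := (hopen.disjoint_frontier_connectedComponentIn x₀).notMem_of_mem_left hx
  exact hconv.exists_disjoint_of_subset (connectedComponentIn_subset U x₀) hxU
end

section
/- Let D = {x = (x₁,x₂,x₃) ∈ ℝ³ : 1 < |x₁| + |x₃| < 3 and 0 < x₂ < 1}. Then for every point p ∈ ℝ³ \ D there exists an affine line through p, parallel to the x₁-axis or parallel to the x₂-axis, that is disjoint from D. In particular, D is convex relative to the family of affine lines in ℝ³ whose direction is contained in the plane {x : x₃ = 0}. -/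
/-! `Dtorus` is the product of the square annulus `1 < |x₁| + |x₃| < 3` with the interval
`0 < x₂ < 1`. A point outside it fails one of the two factor conditions, and the coordinate
line through it that moves only the coordinates of the other factor keeps that failure, so it
misses `Dtorus`. -/

/-- The bounded nonsmooth domain
`D = {x ∈ ℝ³ : 1 < |x₁| + |x₃| < 3, 0 < x₂ < 1}`. -/
def Dtorus : Set (EuclideanSpace ℝ (Fin 3)) :=
  {x | 1 < |x 0| + |x 2| ∧ |x 0| + |x 2| < 3 ∧ 0 < x 1 ∧ x 1 < 1}

namespace EuclideanSpace

variable {ι : Type*} [DecidableEq ι]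

noncomputable def axisLine (p : EuclideanSpace ℝ ι) (i : ι) :
    AffineSubspace ℝ (EuclideanSpace ℝ ι) :=
  AffineSubspace.mk' p (ℝ ∙ EuclideanSpace.single i 1)

variable {p x v : EuclideanSpace ℝ ι} {i j : ι}

theorem direction_axisLine : (axisLine p i).direction = ℝ ∙ EuclideanSpace.single i 1 :=
  AffineSubspace.direction_mk' _ _

theorem self_mem_axisLine : p ∈ axisLine p i :=
  AffineSubspace.self_mem_mk' _ _

theorem finrank_direction_axisLine : Module.finrank ℝ (axisLine p i).direction = 1 := by
  rw [direction_axisLine]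
  exact finrank_span_singleton (by simp)

theorem apply_eq_zero_of_mem_direction_axisLine (hv : v ∈ (axisLine p i).direction)
    (hji : j ≠ i) : v j = 0 := by
  rw [direction_axisLine] at hv
  obtain ⟨c, rfl⟩ := Submodule.mem_span_singleton.1 hv
  simp [hji]

theorem apply_eq_of_mem_axisLine (hx : x ∈ axisLine p i) (hji : j ≠ i) : x j = p j := by
  have h := apply_eq_zero_of_mem_direction_axisLine (AffineSubspace.vsub_mem_direction hx
    self_mem_axisLine) hji
  rw [vsub_eq_sub, PiLp.sub_apply, sub_eq_zero] at h
  exact h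

end EuclideanSpace

open EuclideanSpace

theorem axisLine_one_inter_Dtorus {p : EuclideanSpace ℝ (Fin 3)}
    (hp : ¬(1 < |p 0| + |p 2| ∧ |p 0| + |p 2| < 3)) :
    (axisLine p 1 : Set (EuclideanSpace ℝ (Fin 3))) ∩ Dtorus = ∅ := by
  refine Set.eq_empty_iff_forall_notMem.2 fun x ⟨hx, hxD⟩ => hp ?_
  rw [← apply_eq_of_mem_axisLine hx (by decide : (0 : Fin 3) ≠ 1),
    ← apply_eq_of_mem_axisLine hx (by decide : (2 : Fin 3) ≠ 1)]
  exact ⟨hxD.1, hxD.2.1⟩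

theorem axisLine_zero_inter_Dtorus {p : EuclideanSpace ℝ (Fin 3)}
    (hp : ¬(0 < p 1 ∧ p 1 < 1)) :
    (axisLine p 0 : Set (EuclideanSpace ℝ (Fin 3))) ∩ Dtorus = ∅ := by
  refine Set.eq_empty_iff_forall_notMem.2 fun x ⟨hx, hxD⟩ => hp ?_
  rw [← apply_eq_of_mem_axisLine hx (by decide : (1 : Fin 3) ≠ 0)]
  exact hxD.2.2

theorem exists_axisLine_inter_Dtorus_eq_empty {p : EuclideanSpace ℝ (Fin 3)} (hp : p ∉ Dtorus) :
    ∃ i : Fin 3, (i = 0 ∨ i = 1) ∧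
      (axisLine p i : Set (EuclideanSpace ℝ (Fin 3))) ∩ Dtorus = ∅ := by
  by_cases h : 1 < |p 0| + |p 2| ∧ |p 0| + |p 2| < 3
  · exact ⟨0, Or.inl rfl, axisLine_zero_inter_Dtorus fun h' => hp ⟨h.1, h.2, h'⟩⟩
  · exact ⟨1, Or.inr rfl, axisLine_one_inter_Dtorus h⟩

/-- Through every point of the complement of `Dtorus` there passes an affine line
parallel to the `x₁`-axis or to the `x₂`-axis and disjoint from `Dtorus`; in
particular `Dtorus` is convex relative to the family of affine lines whose direction
lies in the plane `{x | x₃ = 0}`. -/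
theorem torus_example_linearly_convex :
    (∀ p ∉ Dtorus, ∃ l : AffineSubspace ℝ (EuclideanSpace ℝ (Fin 3)),
      (l.direction = Submodule.span ℝ {EuclideanSpace.single (0 : Fin 3) (1 : ℝ)} ∨
       l.direction = Submodule.span ℝ {EuclideanSpace.single (1 : Fin 3) (1 : ℝ)}) ∧
      p ∈ l ∧ (l : Set (EuclideanSpace ℝ (Fin 3))) ∩ Dtorus = ∅) ∧
    (∀ p ∉ Dtorus, ∃ l : AffineSubspace ℝ (EuclideanSpace ℝ (Fin 3)),
      Module.finrank ℝ l.direction = 1 ∧ (∀ v ∈ l.direction, v 2 = 0) ∧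
      p ∈ l ∧ (l : Set (EuclideanSpace ℝ (Fin 3))) ∩ Dtorus = ∅) := by
  constructor
  · intro p hp
    obtain ⟨i, rfl | rfl, hdisj⟩ := exists_axisLine_inter_Dtorus_eq_empty hp
    · exact ⟨_, Or.inl direction_axisLine, self_mem_axisLine, hdisj⟩
    · exact ⟨_, Or.inr direction_axisLine, self_mem_axisLine, hdisj⟩
  · intro p hp
    obtain ⟨i, hi, hdisj⟩ := exists_axisLine_inter_Dtorus_eq_empty hp
    refine ⟨_, finrank_direction_axisLine, fun v hv => ?_, self_mem_axisLine, hdisj⟩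
    exact apply_eq_zero_of_mem_direction_axisLine hv (by rcases hi with rfl | rfl <;> decide)
end
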